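/- Let Z^g_n = L_n^α + (1 - 2^α) L_n + 2^α (n+2) with L_n = 3 + Binomial(n-1,p), 0 < p < 1, and integer α ≥ 3. Then for every r > 0, Z^g_n / n^α converges to p^α in L^r (in r-th mean) as n → ∞. -/

import Mathlib

/-
Write `L_n = 3 + K` with `K ~ Binomial(n-1, p)`. Since `x ↦ x^α` is Lipschitz on `[0, 3]` and
the lower-order terms of `Z^g_n` are `O(n) = o(n^α)` (as `α ≥ 2`), the deviation
`|Z^g_n / n^α - p^α|` is at most `(α 3^(α-1) |K - (n-1)p| + C) / n`. It is therefore uniformly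
bounded, and small on `{|K - (n-1)p| ≤ δ n}` for large `n`; Chebyshev's inequality gives the
complement probability `O(1/n)`, hence convergence in every mean.
-/

open Filter MeasureTheory Asymptotics Topology

/-- Expectation of `f` under a Binomial(m, p) distribution, as a finite sum. -/
noncomputable def binExp (m : ℕ) (p : ℝ) (f : ℕ → ℝ) : ℝ :=
  ∑ k ∈ Finset.range (m+1), (m.choose k : ℝ) * p^k * (1-p)^(m-k) * f k

/-- Variance of `f` under a Binomial(m, p) distribution. -/
noncomputable def binVar (m : ℕ) (p : ℝ) (f : ℕ → ℝ) : ℝ :=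
  binExp m p (fun k => (f k - binExp m p f)^2)

section BinomialExpectation

variable {m : ℕ} {p : ℝ}

lemma binExp_add (f g : ℕ → ℝ) :
    binExp m p (fun k => f k + g k) = binExp m p f + binExp m p g := by
  simp only [binExp, mul_add, Finset.sum_add_distrib]

lemma binExp_const_mul (c : ℝ) (f : ℕ → ℝ) :
    binExp m p (fun k => c * f k) = c * binExp m p f := by
  simp only [binExp, Finset.mul_sum]
  exact Finset.sum_congr rfl fun k _ => by ring

lemma binExp_const (c : ℝ) : binExp m p (fun _ => c) = c := by
  calc binExp m p (fun _ => c)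
      = c * ∑ k ∈ Finset.range (m + 1), p ^ k * (1 - p) ^ (m - k) * (m.choose k : ℝ) := by
        simp only [binExp, Finset.mul_sum]
        exact Finset.sum_congr rfl fun k _ => by ring
    _ = c := by rw [← add_pow, add_sub_cancel, one_pow, mul_one]

/-- The absorption identity `k · C(m+1, k) = (m+1) · C(m, k-1)` at the level of expectations. -/
lemma binExp_succ_natCast_mul (f : ℕ → ℝ) :
    binExp (m + 1) p (fun k => k * f k) = (m + 1) * p * binExp m p (fun i => f (i + 1)) := by
  rw [binExp, Finset.sum_range_succ', binExp, Finset.mul_sum]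
  simp only [Nat.cast_zero, zero_mul, mul_zero, add_zero]
  refine Finset.sum_congr rfl fun i _ => ?_
  have hchoose : ((m + 1).choose (i + 1) : ℝ) * (i + 1) = (m + 1) * m.choose i := by
    exact_mod_cast (Nat.add_one_mul_choose_eq m i).symm
  rw [show m + 1 - (i + 1) = m - i by omega]
  push_cast
  linear_combination p ^ (i + 1) * (1 - p) ^ (m - i) * f (i + 1) * hchoose

lemma binExp_natCast : binExp m p (fun k => (k : ℝ)) = m * p := by
  cases m with
  | zero => simp [binExp]
  | succ m =>
    simpa [binExp_const] using binExp_succ_natCast_mul (m := m) (p := p) (fun _ => 1)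

lemma binExp_natCast_mul_pred :
    binExp m p (fun k => (k : ℝ) * (k - 1)) = m * (m - 1) * p ^ 2 := by
  cases m with
  | zero => simp [binExp]
  | succ m =>
    rw [binExp_succ_natCast_mul (fun k => (k : ℝ) - 1)]
    simp only [Nat.cast_add, Nat.cast_one, add_sub_cancel_right, binExp_natCast]
    ring

lemma binExp_sq_sub_mean : binExp m p (fun k => ((k : ℝ) - m * p) ^ 2) = m * p * (1 - p) := by
  have hsq : (fun k : ℕ => ((k : ℝ) - m * p) ^ 2) =
      fun k : ℕ => ((k : ℝ) * (k - 1) + (1 - 2 * m * p) * k) + (m * p) ^ 2 := by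
    funext k; ring
  rw [hsq, binExp_add, binExp_add, binExp_const_mul, binExp_natCast_mul_pred, binExp_natCast,
    binExp_const]
  ring

lemma binExp_mono (hp0 : 0 ≤ p) (hp1 : p ≤ 1) {f g : ℕ → ℝ} (h : ∀ k ≤ m, f k ≤ g k) :
    binExp m p f ≤ binExp m p g := by
  refine Finset.sum_le_sum fun k hk => mul_le_mul_of_nonneg_left ?_ ?_
  · exact h k (Nat.lt_succ_iff.mp (Finset.mem_range.mp hk))
  · have : 0 ≤ 1 - p := by linarith
    positivity

lemma binExp_nonneg (hp0 : 0 ≤ p) (hp1 : p ≤ 1) {f : ℕ → ℝ} (h : ∀ k ≤ m, 0 ≤ f k) :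
    0 ≤ binExp m p f := by
  simpa only [binExp_const] using binExp_mono hp0 hp1 h

/-- A form of Chebyshev's inequality. -/
lemma binExp_le_of_le_near_mean (hp0 : 0 ≤ p) (hp1 : p ≤ 1) {f : ℕ → ℝ} {η B c : ℝ}
    (hc : 0 < c) (hη : 0 ≤ η) (hB : 0 ≤ B)
    (hnear : ∀ k ≤ m, |(k : ℝ) - m * p| ≤ c → f k ≤ η) (hfar : ∀ k ≤ m, f k ≤ B) :
    binExp m p f ≤ η + B / c ^ 2 * (m * p * (1 - p)) := by
  calc binExp m p f ≤ binExp m p (fun k => η + B / c ^ 2 * ((k : ℝ) - m * p) ^ 2) := by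
        refine binExp_mono hp0 hp1 fun k hk => ?_
        by_cases hk' : |(k : ℝ) - m * p| ≤ c
        · have : 0 ≤ B / c ^ 2 * ((k : ℝ) - m * p) ^ 2 := by positivity
          linarith [hnear k hk hk']
        · have hsq : c ^ 2 ≤ ((k : ℝ) - m * p) ^ 2 := by
            rw [← sq_abs ((k : ℝ) - m * p)]
            exact pow_le_pow_left₀ hc.le (not_le.mp hk').le 2
          have : B ≤ B / c ^ 2 * ((k : ℝ) - m * p) ^ 2 := by
            rw [div_mul_eq_mul_div, le_div_iff₀ (by positivity)]
            exact mul_le_mul_of_nonneg_left hsq hB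
          linarith [hfar k hk]
    _ = η + B / c ^ 2 * (m * p * (1 - p)) := by
        rw [binExp_add, binExp_const, binExp_const_mul, binExp_sq_sub_mean]

end BinomialExpectation

/-- Convergence in probability plus a uniform bound gives convergence in mean. -/
theorem tendsto_binExp_of_le_near_mean {m : ℕ → ℕ} (hm : ∀ n, m n ≤ n) {p : ℝ} (hp0 : 0 ≤ p)
    (hp1 : p ≤ 1) {f : ℕ → ℕ → ℝ} {B : ℝ} (hf0 : ∀ n k, 0 ≤ f n k)
    (hfB : ∀ᶠ n in atTop, ∀ k ≤ m n, f n k ≤ B)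
    (hnear : ∀ ε > 0, ∃ δ > 0, ∀ᶠ n in atTop,
      ∀ k ≤ m n, |(k : ℝ) - m n * p| ≤ δ * n → f n k ≤ ε) :
    Tendsto (fun n => binExp (m n) p (f n)) atTop (𝓝 0) := by
  refine tendsto_order.2 ⟨fun a ha => Eventually.of_forall fun n =>
    ha.trans_le (binExp_nonneg hp0 hp1 fun k _ => hf0 n k), fun ε hε => ?_⟩
  obtain ⟨δ, hδ, hδnear⟩ := hnear (ε / 2) (half_pos hε)
  have hvar : ∀ᶠ n : ℕ in atTop, B / δ ^ 2 / n < ε / 2 :=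
    (tendsto_const_div_atTop_nhds_zero_nat (B / δ ^ 2)).eventually (gt_mem_nhds (half_pos hε))
  filter_upwards [hfB, hδnear, hvar, eventually_gt_atTop 0] with n hfBn hnearn hvarn hn
  have hB : 0 ≤ B := (hf0 n 0).trans (hfBn 0 (Nat.zero_le _))
  have hnR : (0 : ℝ) < n := Nat.cast_pos.mpr hn
  have hmvar : (m n : ℝ) * p * (1 - p) ≤ n := by
    have hmn : (m n : ℝ) ≤ n := Nat.cast_le.mpr (hm n)
    have hpq : p * (1 - p) ≤ 1 := by nlinarith
    calc (m n : ℝ) * p * (1 - p) = m n * (p * (1 - p)) := by ring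
      _ ≤ m n * 1 := by gcongr
      _ ≤ n := by linarith
  calc binExp (m n) p (f n) ≤ ε / 2 + B / (δ * n) ^ 2 * (m n * p * (1 - p)) :=
        binExp_le_of_le_near_mean hp0 hp1 (by positivity) (half_pos hε).le hB hnearn hfBn
    _ ≤ ε / 2 + B / (δ * n) ^ 2 * n := by gcongr
    _ = ε / 2 + B / δ ^ 2 / n := by field_simp
    _ < ε := by linarith

/-- `Z^g_n` as a function of `L_n`. -/
noncomputable def spiderZagreb (α n : ℕ) (L : ℝ) : ℝ :=
  L ^ α + (1 - 2 ^ α) * L + 2 ^ α * ((n : ℝ) + 2)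

section SpiderZagreb

variable {α n k : ℕ} {p : ℝ}

lemma abs_spiderZagreb_sub_pow_le (hk : k < n) :
    |spiderZagreb α n (k + 3) - ((k : ℝ) + 3) ^ α| ≤ 6 * 2 ^ α * n := by
  have hkn : (k : ℝ) + 1 ≤ n := by exact_mod_cast hk
  have h2α : (1 : ℝ) ≤ 2 ^ α := one_le_pow₀ (by norm_num)
  have hK : (0 : ℝ) ≤ k := k.cast_nonneg
  have htail : spiderZagreb α n (k + 3) - ((k : ℝ) + 3) ^ α
      = (1 - 2 ^ α) * ((k : ℝ) + 3) + 2 ^ α * ((n : ℝ) + 2) := by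
    rw [spiderZagreb]; ring
  rw [htail, abs_le]
  constructor <;> nlinarith

lemma abs_spiderZagreb_div_sub_le (hp0 : 0 ≤ p) (hp1 : p ≤ 1) (hα : 2 ≤ α) (hk : k < n) :
    |spiderZagreb α n (k + 3) / n ^ α - p ^ α|
      ≤ (α * 3 ^ (α - 1) * |(k : ℝ) - (n - 1 : ℕ) * p|
          + (3 * α * 3 ^ (α - 1) + 6 * 2 ^ α)) / n := by
  have hn : 1 ≤ n := k.zero_le.trans_lt hk
  have hnR : (0 : ℝ) < n := by exact_mod_cast hn
  have hkn : (k : ℝ) + 3 ≤ 3 * n := by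
    have : (k : ℝ) + 1 ≤ n := by exact_mod_cast hk
    linarith
  set x : ℝ := ((k : ℝ) + 3) / n with hx
  have hx0 : 0 ≤ x := by positivity
  have hx3 : x ≤ 3 := by rw [hx, div_le_iff₀ hnR]; linarith
  have hsplit : spiderZagreb α n (k + 3) / n ^ α - p ^ α
      = (x ^ α - p ^ α) + (spiderZagreb α n (k + 3) - ((k : ℝ) + 3) ^ α) / n ^ α := by
    rw [hx, div_pow]; ring
  have hxp : |x - p| ≤ (|(k : ℝ) - (n - 1 : ℕ) * p| + 3) / n := by
    have : x - p = ((k - (n - 1 : ℕ) * p) + (3 - p)) / n := by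
      rw [hx, Nat.cast_sub hn]; field_simp; ring
    rw [this, abs_div, abs_of_pos hnR]
    gcongr
    refine (abs_add_le _ _).trans (add_le_add_right ?_ _)
    rw [abs_of_nonneg (by linarith)]; linarith
  have hpow : |x ^ α - p ^ α| ≤ α * 3 ^ (α - 1) * |x - p| := by
    have hmax : max |x| |p| ≤ 3 := by
      rw [abs_of_nonneg hx0, abs_of_nonneg hp0]; exact max_le hx3 (by linarith)
    calc |x ^ α - p ^ α| ≤ |x - p| * α * max |x| |p| ^ (α - 1) := abs_pow_sub_pow_le ..
      _ ≤ |x - p| * α * 3 ^ (α - 1) := by gcongr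
      _ = α * 3 ^ (α - 1) * |x - p| := by ring
  have htail : |(spiderZagreb α n (k + 3) - ((k : ℝ) + 3) ^ α) / n ^ α| ≤ 6 * 2 ^ α / n := by
    have hn2 : (n : ℝ) * n ≤ n ^ α := by
      rw [← sq]; exact pow_le_pow_right₀ (by exact_mod_cast hn) hα
    have hnα : (0 : ℝ) < n ^ α := pow_pos hnR α
    rw [abs_div, abs_of_pos hnα, div_le_div_iff₀ hnα hnR]
    calc |spiderZagreb α n (k + 3) - ((k : ℝ) + 3) ^ α| * n ≤ 6 * 2 ^ α * n * n := by
          gcongr; exact abs_spiderZagreb_sub_pow_le hk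
      _ ≤ 6 * 2 ^ α * n ^ α := by rw [mul_assoc]; gcongr
  calc |spiderZagreb α n (k + 3) / n ^ α - p ^ α|
      ≤ α * 3 ^ (α - 1) * |x - p| + 6 * 2 ^ α / n := by
        rw [hsplit]; exact (abs_add_le _ _).trans (add_le_add hpow htail)
    _ ≤ α * 3 ^ (α - 1) * ((|(k : ℝ) - (n - 1 : ℕ) * p| + 3) / n) + 6 * 2 ^ α / n := by
        gcongr
    _ = (α * 3 ^ (α - 1) * |(k : ℝ) - (n - 1 : ℕ) * p|
          + (3 * α * 3 ^ (α - 1) + 6 * 2 ^ α)) / n := by ring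

lemma abs_spiderZagreb_div_sub_le_const (hp0 : 0 ≤ p) (hp1 : p ≤ 1) (hα : 2 ≤ α) (hk : k < n) :
    |spiderZagreb α n (k + 3) / n ^ α - p ^ α| ≤ 4 * α * 3 ^ (α - 1) + 6 * 2 ^ α := by
  have hnR : (1 : ℝ) ≤ n := by exact_mod_cast k.zero_le.trans_lt hk
  have hdist : |(k : ℝ) - (n - 1 : ℕ) * p| ≤ n := by
    have hkn : (k : ℝ) ≤ (n - 1 : ℕ) := by exact_mod_cast Nat.le_sub_one_of_lt hk
    have hn1 : ((n - 1 : ℕ) : ℝ) ≤ n := by exact_mod_cast Nat.sub_le n 1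
    have hmp : ((n - 1 : ℕ) : ℝ) * p ≤ (n - 1 : ℕ) := mul_le_of_le_one_right (by positivity) hp1
    rw [abs_sub_le_iff]
    constructor <;> nlinarith [(n - 1 : ℕ).cast_nonneg (α := ℝ), k.cast_nonneg (α := ℝ)]
  refine (abs_spiderZagreb_div_sub_le hp0 hp1 hα hk).trans ?_
  rw [div_le_iff₀ (by linarith)]
  have hL : (0 : ℝ) ≤ α * 3 ^ (α - 1) := by positivity
  have h2α : (0 : ℝ) ≤ 2 ^ α := by positivity
  nlinarith [mul_le_mul_of_nonneg_left hdist hL]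

lemma abs_spiderZagreb_div_sub_le_of_near_mean (hp0 : 0 ≤ p) (hp1 : p ≤ 1) (hα : 2 ≤ α)
    {ε : ℝ} (hε : 0 < ε) : ∃ δ > 0, ∀ᶠ n : ℕ in atTop, ∀ k ≤ n - 1,
      |(k : ℝ) - (n - 1 : ℕ) * p| ≤ δ * n → |spiderZagreb α n (k + 3) / n ^ α - p ^ α| ≤ ε := by
  set L : ℝ := α * 3 ^ (α - 1)
  have hα0 : (0 : ℝ) < α := by exact_mod_cast (by omega : 0 < α)
  have hL : 0 < L := by positivity
  refine ⟨ε / (2 * L), by positivity, ?_⟩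
  have hsmall : ∀ᶠ n : ℕ in atTop, (3 * L + 6 * 2 ^ α) / n < ε / 2 :=
    (tendsto_const_div_atTop_nhds_zero_nat _).eventually (gt_mem_nhds (half_pos hε))
  filter_upwards [hsmall, eventually_gt_atTop 0] with n hsmalln hn k hk hnear
  have hnR : (0 : ℝ) < n := by exact_mod_cast hn
  calc |spiderZagreb α n (k + 3) / n ^ α - p ^ α|
      ≤ (L * |(k : ℝ) - (n - 1 : ℕ) * p| + (3 * L + 6 * 2 ^ α)) / n :=
        (abs_spiderZagreb_div_sub_le hp0 hp1 hα (by omega)).trans_eq (by ring)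
    _ ≤ (L * (ε / (2 * L) * n) + (3 * L + 6 * 2 ^ α)) / n := by gcongr
    _ = ε / 2 + (3 * L + 6 * 2 ^ α) / n := by field_simp
    _ ≤ ε := by linarith

end SpiderZagreb

/-- Z^g_n / n^α → p^α in L^r for every r > 0: E[|Z^g_n/n^α - p^α|^r] → 0. -/
theorem stmt9 (p : ℝ) (hp0 : 0 < p) (hp1 : p < 1) (α : ℕ) (hα : 3 ≤ α)
    (r : ℝ) (hr : 0 < r) :
    Filter.Tendsto (fun n : ℕ =>
      binExp (n-1) p (fun k => |((((k : ℝ) + 3) ^ α + (1 - 2 ^ α) * ((k : ℝ) + 3) + 2 ^ α * ((n : ℝ) + 2)) / (n : ℝ) ^ α - p ^ α)| ^ r))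
      Filter.atTop (𝓝 0) := by
  have hα2 : 2 ≤ α := by omega
  refine tendsto_binExp_of_le_near_mean (m := fun n => n - 1) (fun n => Nat.sub_le n 1) hp0.le
    hp1.le (f := fun n k => |spiderZagreb α n (k + 3) / n ^ α - p ^ α| ^ r)
    (B := (4 * α * 3 ^ (α - 1) + 6 * 2 ^ α) ^ r) (fun n k => by positivity) ?_ ?_
  · filter_upwards [eventually_gt_atTop 0] with n hn k hk
    exact Real.rpow_le_rpow (abs_nonneg _)
      (abs_spiderZagreb_div_sub_le_const hp0.le hp1.le hα2 (by omega)) hr.le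
  · intro ε hε
    obtain ⟨δ, hδ, hnear⟩ :=
      abs_spiderZagreb_div_sub_le_of_near_mean hp0.le hp1.le hα2 (Real.rpow_pos_of_pos hε r⁻¹)
    refine ⟨δ, hδ, hnear.mono fun n hn k hk hkδ => ?_⟩
    calc |spiderZagreb α n (k + 3) / n ^ α - p ^ α| ^ r ≤ (ε ^ r⁻¹) ^ r :=
          Real.rpow_le_rpow (abs_nonneg _) (hn k hk hkδ) hr.le
      _ = ε := Real.rpow_inv_rpow hε.le hr.ne'
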